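/- arXiv:math/0206271 — 2 statements merged into one kernel-verified Lean document; each statement's English description precedes it below -/
import Mathlib

section
/- For all smooth φ, ψ, χ : U → ℂ the second-order associativity identity holds on U: C₂(φ,ψ)·χ + C₁(C₁(φ,ψ), χ) + C₂(φ·ψ, χ) = φ·C₂(ψ,χ) + C₁(φ, C₁(ψ,χ)) + C₂(φ, ψ·χ). -/
open scoped BigOperators

noncomputable section

/-- The `k`-th standard basis vector of `ℂⁿ`. -/
def ebasis (n : ℕ) (k : Fin n) : Fin n → ℂ := Pi.single k 1

/-- The holomorphic Wirtinger derivative `∂ₖ f`, computed via the real Fréchet derivative: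
`∂ₖ f (z) = (1/2) (Df(z)(eₖ) - i · Df(z)(i·eₖ))`. -/
def wdP (n : ℕ) (k : Fin n) (f : (Fin n → ℂ) → ℂ) : (Fin n → ℂ) → ℂ :=
  fun z => (1 / 2 : ℂ) *
    (fderiv ℝ f z (ebasis n k) - Complex.I * fderiv ℝ f z (Complex.I • ebasis n k))

/-- The antiholomorphic Wirtinger derivative `∂̄ₖ f`:
`∂̄ₖ f (z) = (1/2) (Df(z)(eₖ) + i · Df(z)(i·eₖ))`. -/
def wdB (n : ℕ) (k : Fin n) (f : (Fin n → ℂ) → ℂ) : (Fin n → ℂ) → ℂ :=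
  fun z => (1 / 2 : ℂ) *
    (fderiv ℝ f z (ebasis n k) + Complex.I * fderiv ℝ f z (Complex.I • ebasis n k))

/-- The Kähler potential viewed as a complex valued function. -/
def Phic (n : ℕ) (Φ : (Fin n → ℂ) → ℝ) : (Fin n → ℂ) → ℂ := fun z => (Φ z : ℂ)

/-- The metric `g_{k l̄} = ∂_k ∂̄_l Φ`. -/
def gdn (n : ℕ) (Φ : (Fin n → ℂ) → ℝ) (k l : Fin n) : (Fin n → ℂ) → ℂ :=
  wdP n k (wdB n l (Phic n Φ))

/-- `g_{k p t̄} = ∂_k ∂_p ∂̄_t Φ`. -/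
def g3h (n : ℕ) (Φ : (Fin n → ℂ) → ℝ) (k p t : Fin n) : (Fin n → ℂ) → ℂ :=
  wdP n k (wdP n p (wdB n t (Phic n Φ)))

/-- `g_{s q̄ l̄} = ∂_s ∂̄_q ∂̄_l Φ`. -/
def g3a (n : ℕ) (Φ : (Fin n → ℂ) → ℝ) (s q l : Fin n) : (Fin n → ℂ) → ℂ :=
  wdP n s (wdB n q (wdB n l (Phic n Φ)))

/-- `g_{a b̄ k l̄} = ∂_a ∂_k ∂̄_b ∂̄_l Φ`. -/
def g4 (n : ℕ) (Φ : (Fin n → ℂ) → ℝ) (a b k l : Fin n) : (Fin n → ℂ) → ℂ :=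
  wdP n a (wdP n k (wdB n b (wdB n l (Phic n Φ))))

/-- Christoffel symbol `Γ^s_{kp} = Σ_t g_{k p t̄} g^{t̄ s}`. -/
def GamH (n : ℕ) (Φ : (Fin n → ℂ) → ℝ) (ginv : Fin n → Fin n → (Fin n → ℂ) → ℂ)
    (s k p : Fin n) : (Fin n → ℂ) → ℂ :=
  fun z => ∑ t, g3h n Φ k p t z * ginv t s z

/-- Christoffel symbol `Γ^t̄_{l̄ q̄} = Σ_s g^{t̄ s} g_{s q̄ l̄}`. -/
def GamB (n : ℕ) (Φ : (Fin n → ℂ) → ℝ) (ginv : Fin n → Fin n → (Fin n → ℂ) → ℂ)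
    (t l q : Fin n) : (Fin n → ℂ) → ℂ :=
  fun z => ∑ s, ginv t s z * g3a n Φ s q l z

/-- Covariant derivative `ψ_{/kp} = ∂_p ψ_{/k} - Σ_s Γ^s_{pk} ψ_{/s}`. -/
def cdH2 (n : ℕ) (Φ : (Fin n → ℂ) → ℝ) (ginv : Fin n → Fin n → (Fin n → ℂ) → ℂ)
    (ψ : (Fin n → ℂ) → ℂ) (k p : Fin n) : (Fin n → ℂ) → ℂ :=
  fun z => wdP n p (wdP n k ψ) z - ∑ s, GamH n Φ ginv s p k z * wdP n s ψ z

/-- Covariant derivative `ψ_{/kps} = ∂_s ψ_{/kp} - Σ_a Γ^a_{sk} ψ_{/ap} - Σ_a Γ^a_{sp} ψ_{/ka}`. -/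
def cdH3 (n : ℕ) (Φ : (Fin n → ℂ) → ℝ) (ginv : Fin n → Fin n → (Fin n → ℂ) → ℂ)
    (ψ : (Fin n → ℂ) → ℂ) (k p s : Fin n) : (Fin n → ℂ) → ℂ :=
  fun z => wdP n s (cdH2 n Φ ginv ψ k p) z
    - ∑ a, GamH n Φ ginv a s k z * cdH2 n Φ ginv ψ a p z
    - ∑ a, GamH n Φ ginv a s p z * cdH2 n Φ ginv ψ k a z

/-- Covariant derivative `φ_{/l̄q̄} = ∂̄_q φ_{/l̄} - Σ_t Γ^t̄_{q̄l̄} φ_{/t̄}`. -/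
def cdB2 (n : ℕ) (Φ : (Fin n → ℂ) → ℝ) (ginv : Fin n → Fin n → (Fin n → ℂ) → ℂ)
    (φ : (Fin n → ℂ) → ℂ) (l q : Fin n) : (Fin n → ℂ) → ℂ :=
  fun z => wdB n q (wdB n l φ) z - ∑ t, GamB n Φ ginv t q l z * wdB n t φ z

/-- Covariant derivative `φ_{/l̄q̄t̄} = ∂̄_t φ_{/l̄q̄} - Σ_a Γ^ā_{t̄l̄} φ_{/āq̄} - Σ_a Γ^ā_{t̄q̄} φ_{/l̄ā}`. -/
def cdB3 (n : ℕ) (Φ : (Fin n → ℂ) → ℝ) (ginv : Fin n → Fin n → (Fin n → ℂ) → ℂ)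
    (φ : (Fin n → ℂ) → ℂ) (l q t : Fin n) : (Fin n → ℂ) → ℂ :=
  fun z => wdB n t (cdB2 n Φ ginv φ l q) z
    - ∑ a, GamB n Φ ginv a t l z * cdB2 n Φ ginv φ a q z
    - ∑ a, GamB n Φ ginv a t q z * cdB2 n Φ ginv φ l a z

/-- The curvature `R^{q̄p}_{k l̄} = ∂_k ∂̄_l g^{q̄p} - Σ_{m,n} (∂̄_l g^{q̄m})(∂_k g^{n̄p}) g_{m n̄}`. -/
def Rcur (n : ℕ) (Φ : (Fin n → ℂ) → ℝ) (ginv : Fin n → Fin n → (Fin n → ℂ) → ℂ)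
    (q p k l : Fin n) : (Fin n → ℂ) → ℂ :=
  fun z => wdP n k (wdB n l (ginv q p)) z
    - ∑ m, ∑ m', wdB n l (ginv q m) z * wdP n k (ginv m' p) z * gdn n Φ m m' z

/-- `R^{l̄ k q̄ p} = Σ_{a,b} g^{l̄ a} g^{b̄ k} R^{q̄p}_{a b̄}`. -/
def Rup4 (n : ℕ) (Φ : (Fin n → ℂ) → ℝ) (ginv : Fin n → Fin n → (Fin n → ℂ) → ℂ)
    (l k q p : Fin n) : (Fin n → ℂ) → ℂ :=
  fun z => ∑ a, ∑ b, ginv l a z * ginv b k z * Rcur n Φ ginv q p a b z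

/-- `C₁(φ,ψ) = Σ g^{l̄k} (∂̄_l φ)(∂_k ψ)`. -/
def C1op (n : ℕ) (ginv : Fin n → Fin n → (Fin n → ℂ) → ℂ)
    (φ ψ : (Fin n → ℂ) → ℂ) : (Fin n → ℂ) → ℂ :=
  fun z => ∑ l, ∑ k, ginv l k z * wdB n l φ z * wdP n k ψ z

/-- `C₂(φ,ψ) = (1/2) Σ g^{l̄k} g^{q̄p} φ_{/l̄q̄} ψ_{/kp}`. -/
def C2op (n : ℕ) (Φ : (Fin n → ℂ) → ℝ) (ginv : Fin n → Fin n → (Fin n → ℂ) → ℂ)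
    (φ ψ : (Fin n → ℂ) → ℂ) : (Fin n → ℂ) → ℂ :=
  fun z => (1 / 2 : ℂ) * ∑ l, ∑ k, ∑ q, ∑ p,
    ginv l k z * ginv q p z * cdB2 n Φ ginv φ l q z * cdH2 n Φ ginv ψ k p z

/-- `C̃₃(φ,ψ) = (1/6) Σ g^{l̄k} g^{q̄p} g^{t̄s} φ_{/l̄q̄t̄} ψ_{/kps}
  + (1/4) Σ R^{l̄kq̄p} φ_{/l̄q̄} ψ_{/kp}
  + (1/12) Σ g^{n̄m} R^{l̄p}_{mq̄} R^{q̄k}_{pn̄} φ_{/l̄} ψ_{/k}`. -/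
def C3top (n : ℕ) (Φ : (Fin n → ℂ) → ℝ) (ginv : Fin n → Fin n → (Fin n → ℂ) → ℂ)
    (φ ψ : (Fin n → ℂ) → ℂ) : (Fin n → ℂ) → ℂ :=
  fun z =>
    (1 / 6 : ℂ) * (∑ l, ∑ k, ∑ q, ∑ p, ∑ t, ∑ s,
        ginv l k z * ginv q p z * ginv t s z *
          cdB3 n Φ ginv φ l q t z * cdH3 n Φ ginv ψ k p s z)
    + (1 / 4 : ℂ) * (∑ l, ∑ k, ∑ q, ∑ p,
        Rup4 n Φ ginv l k q p z * cdB2 n Φ ginv φ l q z * cdH2 n Φ ginv ψ k p z)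
    + (1 / 12 : ℂ) * (∑ l, ∑ k, (∑ m, ∑ m', ∑ p, ∑ q,
        ginv m' m z * Rcur n Φ ginv l p m q z * Rcur n Φ ginv q k p m' z) *
          wdB n l φ z * wdP n k ψ z)

/-- generic Wirtinger-type derivative -/
def wgen (n : ℕ) (k : Fin n) (c : ℂ) (f : (Fin n → ℂ) → ℂ) : (Fin n → ℂ) → ℂ :=
  fun z => (1 / 2 : ℂ) *
    (fderiv ℝ f z (ebasis n k) + c * fderiv ℝ f z (Complex.I • ebasis n k))

lemma wdP_eq_wgen (n : ℕ) (k : Fin n) (f : (Fin n → ℂ) → ℂ) :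
    wdP n k f = wgen n k (-Complex.I) f := by
  funext z; simp [wdP, wgen]; ring

lemma wdB_eq_wgen (n : ℕ) (k : Fin n) (f : (Fin n → ℂ) → ℂ) :
    wdB n k f = wgen n k Complex.I f := rfl

variable {n : ℕ} {U : Set (Fin n → ℂ)} {z : Fin n → ℂ}

lemma wgen_congr {f g : (Fin n → ℂ) → ℂ} (h : f =ᶠ[nhds z] g) (k : Fin n) (c : ℂ) :
    wgen n k c f z = wgen n k c g z := by
  unfold wgen; rw [h.fderiv_eq]

lemma wgen_add {f g : (Fin n → ℂ) → ℂ} (hf : DifferentiableAt ℝ f z)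
    (hg : DifferentiableAt ℝ g z) (k : Fin n) (c : ℂ) :
    wgen n k c (fun w => f w + g w) z = wgen n k c f z + wgen n k c g z := by
  unfold wgen; rw [fderiv_fun_add hf hg]; simp; ring

lemma wgen_mul {f g : (Fin n → ℂ) → ℂ} (hf : DifferentiableAt ℝ f z)
    (hg : DifferentiableAt ℝ g z) (k : Fin n) (c : ℂ) :
    wgen n k c (fun w => f w * g w) z = wgen n k c f z * g z + f z * wgen n k c g z := by
  unfold wgen; rw [fderiv_fun_mul hf hg]; simp [smul_eq_mul]; ring

lemma wgen_sum {ι : Type*} (s : Finset ι) {F : ι → (Fin n → ℂ) → ℂ}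
    (hF : ∀ i ∈ s, DifferentiableAt ℝ (F i) z) (k : Fin n) (c : ℂ) :
    wgen n k c (fun w => ∑ i ∈ s, F i w) z = ∑ i ∈ s, wgen n k c (F i) z := by
  unfold wgen; rw [fderiv_fun_sum hF]
  simp only [ContinuousLinearMap.coe_sum', Finset.sum_apply, Finset.mul_sum, ← Finset.sum_add_distrib]

lemma contDiffOn_wgen (hU : IsOpen U) {f : (Fin n → ℂ) → ℂ}
    (hf : ContDiffOn ℝ (⊤ : ℕ∞) f U) (k : Fin n) (c : ℂ) :
    ContDiffOn ℝ (⊤ : ℕ∞) (wgen n k c f) U := by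
  have h1 : ContDiffOn ℝ (⊤ : ℕ∞) (fderiv ℝ f) U := hf.fderiv_of_isOpen hU (by simp)
  have h2 : ContDiffOn ℝ (⊤ : ℕ∞) (fun z => fderiv ℝ f z (ebasis n k)) U :=
    h1.clm_apply contDiffOn_const
  have h3 : ContDiffOn ℝ (⊤ : ℕ∞) (fun z => fderiv ℝ f z (Complex.I • ebasis n k)) U :=
    h1.clm_apply contDiffOn_const
  exact contDiffOn_const.mul (h2.add (contDiffOn_const.mul h3))

lemma diffAt_of_cdOn {F : Type*} [NormedAddCommGroup F] [NormedSpace ℝ F]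
    (hU : IsOpen U) (hz : z ∈ U) {f : (Fin n → ℂ) → F}
    (hf : ContDiffOn ℝ (⊤ : ℕ∞) f U) : DifferentiableAt ℝ f z :=
  (hf.contDiffAt (hU.mem_nhds hz)).differentiableAt (by simp)

lemma sderiv_symm (hU : IsOpen U) (hz : z ∈ U) {f : (Fin n → ℂ) → ℂ}
    (hf : ContDiffOn ℝ (⊤ : ℕ∞) f U) (v w : Fin n → ℂ) :
    fderiv ℝ (fun y => fderiv ℝ f y v) z w = fderiv ℝ (fun y => fderiv ℝ f y w) z v := by
  have h1 : ContDiffOn ℝ (⊤ : ℕ∞) (fderiv ℝ f) U := hf.fderiv_of_isOpen hU (by simp)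
  have hf' : DifferentiableAt ℝ (fderiv ℝ f) z := diffAt_of_cdOn hU hz h1
  have hev : ∀ᶠ y in nhds z, HasFDerivAt f (fderiv ℝ f y) y := by
    filter_upwards [hU.mem_nhds hz] with y hy
    exact (diffAt_of_cdOn hU hy hf).hasFDerivAt
  have hsymm := second_derivative_symmetric_of_eventually hev hf'.hasFDerivAt v w
  have e1 : ∀ u : Fin n → ℂ, fderiv ℝ (fun y => fderiv ℝ f y u) z
      = (fderiv ℝ (fderiv ℝ f) z).flip u := by
    intro u
    rw [fderiv_clm_apply hf' (differentiableAt_const u)]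
    simp
  rw [e1 v, e1 w]
  simpa using hsymm.symm

lemma wgen_fderiv_apply (hU : IsOpen U) (hz : z ∈ U) {f : (Fin n → ℂ) → ℂ}
    (hf : ContDiffOn ℝ (⊤ : ℕ∞) f U) (k : Fin n) (c : ℂ) (u : Fin n → ℂ) :
    fderiv ℝ (wgen n k c f) z u = (1 / 2 : ℂ) *
      (fderiv ℝ (fun y => fderiv ℝ f y (ebasis n k)) z u
        + c * fderiv ℝ (fun y => fderiv ℝ f y (Complex.I • ebasis n k)) z u) := by
  have h1 : ContDiffOn ℝ (⊤ : ℕ∞) (fderiv ℝ f) U := hf.fderiv_of_isOpen hU (by simp)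
  have hf' : DifferentiableAt ℝ (fderiv ℝ f) z := diffAt_of_cdOn hU hz h1
  have hA : DifferentiableAt ℝ (fun y => fderiv ℝ f y (ebasis n k)) z :=
    hf'.clm_apply (differentiableAt_const _)
  have hB : DifferentiableAt ℝ (fun y => fderiv ℝ f y (Complex.I • ebasis n k)) z :=
    hf'.clm_apply (differentiableAt_const _)
  have : wgen n k c f = fun y => (1/2 : ℂ) * (fderiv ℝ f y (ebasis n k)
      + c * fderiv ℝ f y (Complex.I • ebasis n k)) := rfl
  rw [this, fderiv_const_mul (hA.fun_add ((differentiableAt_const c).fun_mul hB)),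
    fderiv_fun_add hA ((differentiableAt_const c).fun_mul hB), fderiv_const_mul hB]
  simp only [smul_eq_mul, ContinuousLinearMap.add_apply, ContinuousLinearMap.smul_apply]
  try ring

lemma wgen_wgen (hU : IsOpen U) (hz : z ∈ U) {f : (Fin n → ℂ) → ℂ}
    (hf : ContDiffOn ℝ (⊤ : ℕ∞) f U) (k l : Fin n) (c d : ℂ) :
    wgen n l d (wgen n k c f) z = (1 / 4 : ℂ) *
      (fderiv ℝ (fun y => fderiv ℝ f y (ebasis n k)) z (ebasis n l)
        + c * fderiv ℝ (fun y => fderiv ℝ f y (Complex.I • ebasis n k)) z (ebasis n l)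
        + d * fderiv ℝ (fun y => fderiv ℝ f y (ebasis n k)) z (Complex.I • ebasis n l)
        + c * d * fderiv ℝ (fun y => fderiv ℝ f y (Complex.I • ebasis n k)) z
            (Complex.I • ebasis n l)) := by
  show (1/2 : ℂ) * _ = _
  rw [wgen_fderiv_apply hU hz hf k c (ebasis n l),
    wgen_fderiv_apply hU hz hf k c (Complex.I • ebasis n l)]
  ring

lemma wgen_comm (hU : IsOpen U) (hz : z ∈ U) {f : (Fin n → ℂ) → ℂ}
    (hf : ContDiffOn ℝ (⊤ : ℕ∞) f U) (k l : Fin n) (c d : ℂ) :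
    wgen n l d (wgen n k c f) z = wgen n k c (wgen n l d f) z := by
  rw [wgen_wgen hU hz hf k l c d, wgen_wgen hU hz hf l k d c,
    sderiv_symm hU hz hf (ebasis n k) (ebasis n l),
    sderiv_symm hU hz hf (Complex.I • ebasis n k) (ebasis n l),
    sderiv_symm hU hz hf (ebasis n k) (Complex.I • ebasis n l),
    sderiv_symm hU hz hf (Complex.I • ebasis n k) (Complex.I • ebasis n l)]
  ring

/-! wrappers -/

lemma wdP_congr {f g : (Fin n → ℂ) → ℂ} (h : f =ᶠ[nhds z] g) (k : Fin n) :
    wdP n k f z = wdP n k g z := by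
  rw [wdP_eq_wgen, wdP_eq_wgen]; exact wgen_congr h k _

lemma wdB_congr {f g : (Fin n → ℂ) → ℂ} (h : f =ᶠ[nhds z] g) (k : Fin n) :
    wdB n k f z = wdB n k g z := by
  rw [wdB_eq_wgen, wdB_eq_wgen]; exact wgen_congr h k _

lemma wdP_add {f g : (Fin n → ℂ) → ℂ} (hf : DifferentiableAt ℝ f z)
    (hg : DifferentiableAt ℝ g z) (k : Fin n) :
    wdP n k (fun w => f w + g w) z = wdP n k f z + wdP n k g z := by
  rw [wdP_eq_wgen, wdP_eq_wgen, wdP_eq_wgen]; exact wgen_add hf hg k _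

lemma wdB_add {f g : (Fin n → ℂ) → ℂ} (hf : DifferentiableAt ℝ f z)
    (hg : DifferentiableAt ℝ g z) (k : Fin n) :
    wdB n k (fun w => f w + g w) z = wdB n k f z + wdB n k g z := by
  rw [wdB_eq_wgen, wdB_eq_wgen, wdB_eq_wgen]; exact wgen_add hf hg k _

lemma wdP_mul {f g : (Fin n → ℂ) → ℂ} (hf : DifferentiableAt ℝ f z)
    (hg : DifferentiableAt ℝ g z) (k : Fin n) :
    wdP n k (fun w => f w * g w) z = wdP n k f z * g z + f z * wdP n k g z := by
  rw [wdP_eq_wgen, wdP_eq_wgen, wdP_eq_wgen]; exact wgen_mul hf hg k _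

lemma wdB_mul {f g : (Fin n → ℂ) → ℂ} (hf : DifferentiableAt ℝ f z)
    (hg : DifferentiableAt ℝ g z) (k : Fin n) :
    wdB n k (fun w => f w * g w) z = wdB n k f z * g z + f z * wdB n k g z := by
  rw [wdB_eq_wgen, wdB_eq_wgen, wdB_eq_wgen]; exact wgen_mul hf hg k _

lemma wdP_sum {ι : Type*} (s : Finset ι) {F : ι → (Fin n → ℂ) → ℂ}
    (hF : ∀ i ∈ s, DifferentiableAt ℝ (F i) z) (k : Fin n) :
    wdP n k (fun w => ∑ i ∈ s, F i w) z = ∑ i ∈ s, wdP n k (F i) z := by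
  simp only [wdP_eq_wgen]; exact wgen_sum s hF k _

lemma wdB_sum {ι : Type*} (s : Finset ι) {F : ι → (Fin n → ℂ) → ℂ}
    (hF : ∀ i ∈ s, DifferentiableAt ℝ (F i) z) (k : Fin n) :
    wdB n k (fun w => ∑ i ∈ s, F i w) z = ∑ i ∈ s, wdB n k (F i) z := by
  simp only [wdB_eq_wgen]; exact wgen_sum s hF k _

lemma contDiffOn_wdP (hU : IsOpen U) {f : (Fin n → ℂ) → ℂ}
    (hf : ContDiffOn ℝ (⊤ : ℕ∞) f U) (k : Fin n) : ContDiffOn ℝ (⊤ : ℕ∞) (wdP n k f) U := by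
  rw [wdP_eq_wgen]; exact contDiffOn_wgen hU hf k _

lemma contDiffOn_wdB (hU : IsOpen U) {f : (Fin n → ℂ) → ℂ}
    (hf : ContDiffOn ℝ (⊤ : ℕ∞) f U) (k : Fin n) : ContDiffOn ℝ (⊤ : ℕ∞) (wdB n k f) U := by
  rw [wdB_eq_wgen]; exact contDiffOn_wgen hU hf k _

lemma wdP_wdP_comm (hU : IsOpen U) (hz : z ∈ U) {f : (Fin n → ℂ) → ℂ}
    (hf : ContDiffOn ℝ (⊤ : ℕ∞) f U) (k l : Fin n) :
    wdP n l (wdP n k f) z = wdP n k (wdP n l f) z := by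
  simp only [wdP_eq_wgen]; exact wgen_comm hU hz hf k l _ _

lemma wdB_wdB_comm (hU : IsOpen U) (hz : z ∈ U) {f : (Fin n → ℂ) → ℂ}
    (hf : ContDiffOn ℝ (⊤ : ℕ∞) f U) (k l : Fin n) :
    wdB n l (wdB n k f) z = wdB n k (wdB n l f) z := by
  simp only [wdB_eq_wgen]; exact wgen_comm hU hz hf k l _ _

lemma wdB_wdP_comm (hU : IsOpen U) (hz : z ∈ U) {f : (Fin n → ℂ) → ℂ}
    (hf : ContDiffOn ℝ (⊤ : ℕ∞) f U) (k l : Fin n) :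
    wdB n l (wdP n k f) z = wdP n k (wdB n l f) z := by
  simp only [wdP_eq_wgen, wdB_eq_wgen]; exact wgen_comm hU hz hf k l _ _

lemma wgen_const (k : Fin n) (c a : ℂ) : wgen n k c (fun _ => a) z = 0 := by
  unfold wgen; rw [fderiv_fun_const]; simp

lemma wdP_const (k : Fin n) (a : ℂ) : wdP n k (fun _ => a) z = 0 := by
  rw [wdP_eq_wgen]; exact wgen_const k _ a

lemma wdB_const (k : Fin n) (a : ℂ) : wdB n k (fun _ => a) z = 0 := by
  rw [wdB_eq_wgen]; exact wgen_const k _ a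

lemma contDiffOn_Phic {Φ : (Fin n → ℂ) → ℝ} (hΦ : ContDiffOn ℝ (⊤ : ℕ∞) Φ U) :
    ContDiffOn ℝ (⊤ : ℕ∞) (Phic n Φ) U :=
  Complex.ofRealCLM.contDiff.comp_contDiffOn hΦ

lemma contDiffOn_gdn (hU : IsOpen U) {Φ : (Fin n → ℂ) → ℝ} (hΦ : ContDiffOn ℝ (⊤ : ℕ∞) Φ U)
    (k l : Fin n) : ContDiffOn ℝ (⊤ : ℕ∞) (gdn n Φ k l) U :=
  contDiffOn_wdP hU (contDiffOn_wdB hU (contDiffOn_Phic hΦ) l) k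

lemma contDiffOn_g3h (hU : IsOpen U) {Φ : (Fin n → ℂ) → ℝ} (hΦ : ContDiffOn ℝ (⊤ : ℕ∞) Φ U)
    (k p t : Fin n) : ContDiffOn ℝ (⊤ : ℕ∞) (g3h n Φ k p t) U :=
  contDiffOn_wdP hU (contDiffOn_wdP hU (contDiffOn_wdB hU (contDiffOn_Phic hΦ) t) p) k

lemma contDiffOn_g3a (hU : IsOpen U) {Φ : (Fin n → ℂ) → ℝ} (hΦ : ContDiffOn ℝ (⊤ : ℕ∞) Φ U)
    (s q l : Fin n) : ContDiffOn ℝ (⊤ : ℕ∞) (g3a n Φ s q l) U :=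
  contDiffOn_wdP hU (contDiffOn_wdB hU (contDiffOn_wdB hU (contDiffOn_Phic hΦ) l) q) s

lemma g3a_symm (hU : IsOpen U) (hz : z ∈ U) {Φ : (Fin n → ℂ) → ℝ}
    (hΦ : ContDiffOn ℝ (⊤ : ℕ∞) Φ U) (s q l : Fin n) :
    g3a n Φ s q l z = g3a n Φ s l q z := by
  have hPc := contDiffOn_Phic (U := U) hΦ
  have hev : wdB n q (wdB n l (Phic n Φ)) =ᶠ[nhds z] wdB n l (wdB n q (Phic n Φ)) := by
    filter_upwards [hU.mem_nhds hz] with w hw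
    exact wdB_wdB_comm hU hw hPc l q
  exact wdP_congr hev s

lemma g3h_symm (hU : IsOpen U) (hz : z ∈ U) {Φ : (Fin n → ℂ) → ℝ}
    (hΦ : ContDiffOn ℝ (⊤ : ℕ∞) Φ U) (k p t : Fin n) :
    g3h n Φ k p t z = g3h n Φ p k t z := by
  have hPc := contDiffOn_Phic (U := U) hΦ
  exact wdP_wdP_comm hU hz (contDiffOn_wdB hU hPc t) p k

section Inverse

variable (hU : IsOpen U) {Φ : (Fin n → ℂ) → ℝ} (hΦ : ContDiffOn ℝ (⊤ : ℕ∞) Φ U)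
  {ginv : Fin n → Fin n → (Fin n → ℂ) → ℂ}
  (hginv : ∀ l k : Fin n, ContDiffOn ℝ (⊤ : ℕ∞) (ginv l k) U)
  (hinv1 : ∀ z ∈ U, ∀ l q : Fin n,
      (∑ k, ginv l k z * gdn n Φ k q z) = if l = q then 1 else 0)
  (hinv2 : ∀ z ∈ U, ∀ p k : Fin n,
      (∑ l, gdn n Φ p l z * ginv l k z) = if p = k then 1 else 0)

include hU hΦ hginv hinv1 hinv2

lemma wdB_ginv (hz : z ∈ U) (m l p : Fin n) :
    wdB n m (ginv l p) z = -∑ a, ∑ b, ginv l a z * g3a n Φ a b m z * ginv b p z := by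
  have hPc := contDiffOn_Phic (U := U) hΦ
  -- derivative of gdn
  have hgd : ∀ k q : Fin n, wdB n m (gdn n Φ k q) z = g3a n Φ k m q z := by
    intro k q
    exact wdB_wdP_comm hU hz (contDiffOn_wdB hU hPc q) k m
  -- differentiate the inverse identity
  have key : ∀ q : Fin n, ∑ k, wdB n m (ginv l k) z * gdn n Φ k q z
      = -∑ k, ginv l k z * g3a n Φ k m q z := by
    intro q
    have h0 : wdB n m (fun w => ∑ k, ginv l k w * gdn n Φ k q w) z = 0 := by
      have hev : (fun w => ∑ k, ginv l k w * gdn n Φ k q w)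
          =ᶠ[nhds z] (fun _ => if l = q then (1:ℂ) else 0) := by
        filter_upwards [hU.mem_nhds hz] with w hw
        exact hinv1 w hw l q
      rw [wdB_congr hev, wdB_const]
    have h1 : wdB n m (fun w => ∑ k, ginv l k w * gdn n Φ k q w) z
        = ∑ k, (wdB n m (ginv l k) z * gdn n Φ k q z
            + ginv l k z * wdB n m (gdn n Φ k q) z) := by
      rw [wdB_sum Finset.univ (fun k _ =>
        (diffAt_of_cdOn hU hz (hginv l k)).fun_mul
          (diffAt_of_cdOn hU hz (contDiffOn_gdn hU hΦ k q))) m]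
      exact Finset.sum_congr rfl fun k _ =>
        wdB_mul (diffAt_of_cdOn hU hz (hginv l k))
          (diffAt_of_cdOn hU hz (contDiffOn_gdn hU hΦ k q)) m
    rw [h0] at h1
    have := h1.symm
    rw [Finset.sum_add_distrib] at this
    have h2 : ∑ k, ginv l k z * wdB n m (gdn n Φ k q) z
        = ∑ k, ginv l k z * g3a n Φ k m q z :=
      Finset.sum_congr rfl fun k _ => by rw [hgd k q]
    linear_combination this - h2
  have hdelta : wdB n m (ginv l p) z
      = ∑ k, wdB n m (ginv l k) z * (if k = p then (1:ℂ) else 0) := by simp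
  rw [hdelta]
  have hrepl : ∀ k : Fin n, (if k = p then (1:ℂ) else 0)
      = ∑ q, gdn n Φ k q z * ginv q p z := fun k => (hinv2 z hz k p).symm
  calc ∑ k, wdB n m (ginv l k) z * (if k = p then (1:ℂ) else 0)
      = ∑ k, ∑ q, wdB n m (ginv l k) z * gdn n Φ k q z * ginv q p z := by
        refine Finset.sum_congr rfl fun k _ => ?_
        rw [hrepl k, Finset.mul_sum]
        exact Finset.sum_congr rfl fun q _ => by ring
    _ = ∑ q, (∑ k, wdB n m (ginv l k) z * gdn n Φ k q z) * ginv q p z := by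
        rw [Finset.sum_comm]
        exact Finset.sum_congr rfl fun q _ => (Finset.sum_mul _ _ _).symm
    _ = ∑ q, (-∑ k, ginv l k z * g3a n Φ k m q z) * ginv q p z := by
        exact Finset.sum_congr rfl fun q _ => by rw [key q]
    _ = -∑ q, ∑ k, ginv l k z * g3a n Φ k m q z * ginv q p z := by
        rw [← Finset.sum_neg_distrib]
        refine Finset.sum_congr rfl fun q _ => ?_
        rw [neg_mul, Finset.sum_mul]
    _ = -∑ a, ∑ b, ginv l a z * g3a n Φ a b m z * ginv b p z := by
        rw [Finset.sum_comm]
        refine neg_inj.mpr (Finset.sum_congr rfl fun a _ =>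
          Finset.sum_congr rfl fun b _ => ?_)
        rw [g3a_symm hU hz hΦ a m b]

lemma wdP_ginv (hz : z ∈ U) (m t k : Fin n) :
    wdP n m (ginv t k) z = -∑ a, ∑ b, ginv t a z * g3h n Φ m a b z * ginv b k z := by
  have hPc := contDiffOn_Phic (U := U) hΦ
  have key : ∀ p : Fin n, ∑ l, gdn n Φ p l z * wdP n m (ginv l k) z
      = -∑ l, g3h n Φ m p l z * ginv l k z := by
    intro p
    have h0 : wdP n m (fun w => ∑ l, gdn n Φ p l w * ginv l k w) z = 0 := by
      have hev : (fun w => ∑ l, gdn n Φ p l w * ginv l k w)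
          =ᶠ[nhds z] (fun _ => if p = k then (1:ℂ) else 0) := by
        filter_upwards [hU.mem_nhds hz] with w hw
        exact hinv2 w hw p k
      rw [wdP_congr hev, wdP_const]
    have h1 : wdP n m (fun w => ∑ l, gdn n Φ p l w * ginv l k w) z
        = ∑ l, (wdP n m (gdn n Φ p l) z * ginv l k z
            + gdn n Φ p l z * wdP n m (ginv l k) z) := by
      rw [wdP_sum Finset.univ (fun l _ =>
        (diffAt_of_cdOn hU hz (contDiffOn_gdn hU hΦ p l)).fun_mul
          (diffAt_of_cdOn hU hz (hginv l k))) m]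
      exact Finset.sum_congr rfl fun l _ =>
        wdP_mul (diffAt_of_cdOn hU hz (contDiffOn_gdn hU hΦ p l))
          (diffAt_of_cdOn hU hz (hginv l k)) m
    rw [h0] at h1
    have h3 := h1.symm
    rw [Finset.sum_add_distrib] at h3
    have h2 : ∑ l, wdP n m (gdn n Φ p l) z * ginv l k z
        = ∑ l, g3h n Φ m p l z * ginv l k z := by
      refine Finset.sum_congr rfl fun l _ => ?_
      have : wdP n m (gdn n Φ p l) z = g3h n Φ m p l z := rfl
      rw [this]
    linear_combination h3 - h2
  have hdelta : wdP n m (ginv t k) z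
      = ∑ l, (if t = l then (1:ℂ) else 0) * wdP n m (ginv l k) z := by simp
  rw [hdelta]
  have hrepl : ∀ l : Fin n, (if t = l then (1:ℂ) else 0)
      = ∑ p, ginv t p z * gdn n Φ p l z := fun l => (hinv1 z hz t l).symm
  calc ∑ l, (if t = l then (1:ℂ) else 0) * wdP n m (ginv l k) z
      = ∑ l, ∑ p, ginv t p z * (gdn n Φ p l z * wdP n m (ginv l k) z) := by
        refine Finset.sum_congr rfl fun l _ => ?_
        rw [hrepl l, Finset.sum_mul]
        exact Finset.sum_congr rfl fun p _ => by ring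
    _ = ∑ p, ginv t p z * ∑ l, gdn n Φ p l z * wdP n m (ginv l k) z := by
        rw [Finset.sum_comm]
        exact Finset.sum_congr rfl fun p _ => (Finset.mul_sum _ _ _).symm
    _ = ∑ p, ginv t p z * -∑ l, g3h n Φ m p l z * ginv l k z := by
        exact Finset.sum_congr rfl fun p _ => by rw [key p]
    _ = -∑ a, ∑ b, ginv t a z * g3h n Φ m a b z * ginv b k z := by
        rw [← Finset.sum_neg_distrib]
        refine Finset.sum_congr rfl fun a _ => ?_
        rw [mul_neg, ← Finset.sum_neg_distrib, Finset.mul_sum, ← Finset.sum_neg_distrib]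
        exact Finset.sum_congr rfl fun b _ => by ring

end Inverse

section Reindex
variable {I : Type*} [Fintype I]

lemma sum4_prod (F : I → I → I → I → ℂ) :
    (∑ l, ∑ k, ∑ q, ∑ p, F l k q p)
      = ∑ v : I × I × I × I, F v.1 v.2.1 v.2.2.1 v.2.2.2 := by
  simp [Fintype.sum_prod_type]

lemma sum6_prod (F : I → I → I → I → I → I → ℂ) :
    (∑ l, ∑ k, ∑ q, ∑ p, ∑ t, ∑ s, F l k q p t s)
      = ∑ v : I × I × I × I × I × I,
          F v.1 v.2.1 v.2.2.1 v.2.2.2.1 v.2.2.2.2.1 v.2.2.2.2.2 := by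
  simp [Fintype.sum_prod_type]

/-- block swap for 4-fold sums -/
lemma sum4_swap (F : I → I → I → I → ℂ) :
    (∑ l, ∑ k, ∑ q, ∑ p, F l k q p) = ∑ l, ∑ k, ∑ q, ∑ p, F q p l k := by
  rw [sum4_prod, sum4_prod (fun l k q p => F q p l k)]
  exact Fintype.sum_equiv
    ⟨fun v => (v.2.2.1, v.2.2.2, v.1, v.2.1),
     fun v => (v.2.2.1, v.2.2.2, v.1, v.2.1),
     fun v => rfl, fun v => rfl⟩ _ _ (fun v => rfl)

/-- reindex (l,k,q,p,t,s) ↦ (q,p,t,k,s,l) -/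
lemma sum6_perm1 (F : I → I → I → I → I → I → ℂ) :
    (∑ l, ∑ k, ∑ q, ∑ p, ∑ t, ∑ s, F q p t k s l)
      = ∑ l, ∑ k, ∑ q, ∑ p, ∑ t, ∑ s, F l k q p t s := by
  rw [sum6_prod, sum6_prod]
  refine Fintype.sum_equiv
    ⟨fun v => (v.2.2.1, v.2.2.2.1, v.2.2.2.2.1, v.2.1, v.2.2.2.2.2, v.1),
     fun v => (v.2.2.2.2.2, v.2.2.2.1, v.1, v.2.1, v.2.2.1, v.2.2.2.2.1),
     fun v => rfl, fun v => rfl⟩ _ _ (fun v => rfl)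

/-- reindex (l,k,q,p,t,s) ↦ (l,k,q,t,p,s) (swap slots 4,5) -/
lemma sum6_perm2 (F : I → I → I → I → I → I → ℂ) :
    (∑ l, ∑ k, ∑ q, ∑ p, ∑ t, ∑ s, F l k q t p s)
      = ∑ l, ∑ k, ∑ q, ∑ p, ∑ t, ∑ s, F l k q p t s := by
  rw [sum6_prod, sum6_prod]
  refine Fintype.sum_equiv
    ⟨fun v => (v.1, v.2.1, v.2.2.1, v.2.2.2.2.1, v.2.2.2.1, v.2.2.2.2.2),
     fun v => (v.1, v.2.1, v.2.2.1, v.2.2.2.2.1, v.2.2.2.1, v.2.2.2.2.2),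
     fun v => rfl, fun v => rfl⟩ _ _ (fun v => rfl)

end Reindex

section Algebra
variable {I : Type*} [Fintype I]

lemma sum4_congr (F G : I → I → I → I → ℂ) (h : ∀ a b c d, F a b c d = G a b c d) :
    (∑ l, ∑ k, ∑ q, ∑ p, F l k q p) = ∑ l, ∑ k, ∑ q, ∑ p, G l k q p :=
  Finset.sum_congr rfl fun a _ => Finset.sum_congr rfl fun b _ =>
    Finset.sum_congr rfl fun c _ => Finset.sum_congr rfl fun d _ => h a b c d

lemma sum6_congr (F G : I → I → I → I → I → I → ℂ)
    (h : ∀ a b c d e f, F a b c d e f = G a b c d e f) :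
    (∑ l, ∑ k, ∑ q, ∑ p, ∑ t, ∑ s, F l k q p t s)
      = ∑ l, ∑ k, ∑ q, ∑ p, ∑ t, ∑ s, G l k q p t s :=
  Finset.sum_congr rfl fun a _ => Finset.sum_congr rfl fun b _ =>
    Finset.sum_congr rfl fun c _ => Finset.sum_congr rfl fun d _ =>
      Finset.sum_congr rfl fun e _ => Finset.sum_congr rfl fun f _ => h a b c d e f

lemma sum4_split3 (F G K : I → I → I → I → ℂ) :
    (∑ l, ∑ k, ∑ q, ∑ p, (F l k q p + G l k q p + K l k q p))
      = (∑ l, ∑ k, ∑ q, ∑ p, F l k q p) + (∑ l, ∑ k, ∑ q, ∑ p, G l k q p)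
        + (∑ l, ∑ k, ∑ q, ∑ p, K l k q p) := by
  simp only [Finset.sum_add_distrib]

lemma key_algebra
    (Gm : I → I → ℂ) (A H : I → I → I → ℂ) (DB DP : I → I → I → ℂ)
    (aB bB bP cP : I → ℂ) (aBB bM cPP : I → I → ℂ)
    (cBa cBb cHb cHc : I → I → ℂ) (a0 b0 c0 : ℂ)
    (hA : ∀ s x y, A s x y = A s y x)
    (hH : ∀ x y t, H x y t = H y x t)
    (haBB : ∀ x y, aBB x y = aBB y x)
    (hcPP : ∀ x y, cPP x y = cPP y x)
    (hDB : ∀ m q p, DB m q p = -∑ a, ∑ b, Gm q a * A a b m * Gm b p)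
    (hDP : ∀ m q p, DP m q p = -∑ a, ∑ b, Gm q a * H m a b * Gm b p)
    (hcBa : ∀ l q, cBa l q = aBB l q - ∑ t, (∑ s, Gm t s * A s l q) * aB t)
    (hcHc : ∀ k p, cHc k p = cPP k p - ∑ s, (∑ t, H p k t * Gm t s) * cP s) :
    (1/2 * (∑ l, ∑ k, ∑ q, ∑ p, Gm l k * Gm q p * cBa l q * cHb k p)) * c0
    + (∑ l, ∑ k, Gm l k * (∑ q, ∑ p, (DB l q p * aB q * bP p
        + Gm q p * aBB q l * bP p + Gm q p * aB q * bM p l)) * cP k)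
    + 1/2 * (∑ l, ∑ k, ∑ q, ∑ p, Gm l k * Gm q p
        * (cBa l q * b0 + a0 * cBb l q + aB l * bB q + aB q * bB l) * cHc k p)
    = a0 * (1/2 * (∑ l, ∑ k, ∑ q, ∑ p, Gm l k * Gm q p * cBb l q * cHc k p))
    + (∑ l, ∑ k, Gm l k * aB l * (∑ q, ∑ p, (DP k q p * bB q * cP p
        + Gm q p * bM k q * cP p + Gm q p * bB q * cPP p k)))
    + 1/2 * (∑ l, ∑ k, ∑ q, ∑ p, Gm l k * Gm q p * cBa l q
        * (cHb k p * c0 + bP k * cP p + bP p * cP k + b0 * cHc k p)) := by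
  -- symmetry of the covariant second derivatives
  have hcBas : ∀ l q, cBa q l = cBa l q := by
    intro l q
    rw [hcBa, hcBa, haBB]
    congr 1
    refine Finset.sum_congr rfl fun t _ => ?_
    congr 1
    exact Finset.sum_congr rfl fun s _ => by rw [hA]
  have hcHcs : ∀ k p, cHc p k = cHc k p := by
    intro k p
    rw [hcHc, hcHc, hcPP]
    congr 1
    refine Finset.sum_congr rfl fun s _ => ?_
    congr 1
    exact Finset.sum_congr rfl fun t _ => by rw [hH]
  -- expansion of the two C1-terms
  have e1 : (∑ l, ∑ k, Gm l k * (∑ q, ∑ p, (DB l q p * aB q * bP p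
        + Gm q p * aBB q l * bP p + Gm q p * aB q * bM p l)) * cP k)
      = -(∑ l, ∑ k, ∑ q, ∑ p, ∑ t, ∑ s,
            Gm l k * Gm q t * A t s l * Gm s p * aB q * bP p * cP k)
        + (∑ l, ∑ k, ∑ q, ∑ p, Gm l k * Gm q p * aBB q l * bP p * cP k)
        + (∑ l, ∑ k, ∑ q, ∑ p, Gm l k * Gm q p * aB q * bM p l * cP k) := by
    simp only [hDB, Finset.mul_sum, Finset.sum_mul, mul_add, add_mul, neg_mul, mul_neg,
      Finset.sum_add_distrib, Finset.sum_neg_distrib]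
    refine congrArg₂ (· + ·) (congrArg₂ (· + ·) ?_ ?_) ?_
    · exact neg_inj.mpr (sum6_congr _ _ fun a b c d e f => by ring)
    · exact sum4_congr _ _ fun a b c d => by ring
    · exact sum4_congr _ _ fun a b c d => by ring
  have e3 : (∑ l, ∑ k, Gm l k * aB l * (∑ q, ∑ p, (DP k q p * bB q * cP p
        + Gm q p * bM k q * cP p + Gm q p * bB q * cPP p k)))
      = -(∑ l, ∑ k, ∑ q, ∑ p, ∑ t, ∑ s,
            Gm l k * aB l * Gm q t * H k t s * Gm s p * bB q * cP p)
        + (∑ l, ∑ k, ∑ q, ∑ p, Gm l k * Gm q p * aB l * bM k q * cP p)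
        + (∑ l, ∑ k, ∑ q, ∑ p, Gm l k * Gm q p * aB l * bB q * cPP p k) := by
    simp only [hDP, Finset.mul_sum, Finset.sum_mul, mul_add, add_mul, neg_mul, mul_neg,
      Finset.sum_add_distrib, Finset.sum_neg_distrib]
    refine congrArg₂ (· + ·) (congrArg₂ (· + ·) ?_ ?_) ?_
    · exact neg_inj.mpr (sum6_congr _ _ fun a b c d e f => by ring)
    · exact sum4_congr _ _ fun a b c d => by ring
    · exact sum4_congr _ _ fun a b c d => by ring
  -- expansion of the two product C2-terms
  have e2 : (∑ l, ∑ k, ∑ q, ∑ p, Gm l k * Gm q p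
        * (cBa l q * b0 + a0 * cBb l q + aB l * bB q + aB q * bB l) * cHc k p)
      = b0 * (∑ l, ∑ k, ∑ q, ∑ p, Gm l k * Gm q p * cBa l q * cHc k p)
        + a0 * (∑ l, ∑ k, ∑ q, ∑ p, Gm l k * Gm q p * cBb l q * cHc k p)
        + (∑ l, ∑ k, ∑ q, ∑ p, Gm l k * Gm q p * aB l * bB q * cHc k p)
        + (∑ l, ∑ k, ∑ q, ∑ p, Gm l k * Gm q p * aB q * bB l * cHc k p) := by
    simp only [Finset.mul_sum, Finset.sum_mul, mul_add, add_mul,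
      Finset.sum_add_distrib]
    refine congrArg₂ (· + ·) (congrArg₂ (· + ·) (congrArg₂ (· + ·) ?_ ?_) ?_) ?_
    · exact sum4_congr _ _ fun a b c d => by ring
    · exact sum4_congr _ _ fun a b c d => by ring
    · exact sum4_congr _ _ fun a b c d => by ring
    · exact sum4_congr _ _ fun a b c d => by ring
  have e4 : (∑ l, ∑ k, ∑ q, ∑ p, Gm l k * Gm q p * cBa l q
        * (cHb k p * c0 + bP k * cP p + bP p * cP k + b0 * cHc k p))
      = c0 * (∑ l, ∑ k, ∑ q, ∑ p, Gm l k * Gm q p * cBa l q * cHb k p)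
        + (∑ l, ∑ k, ∑ q, ∑ p, Gm l k * Gm q p * cBa l q * bP k * cP p)
        + (∑ l, ∑ k, ∑ q, ∑ p, Gm l k * Gm q p * cBa l q * bP p * cP k)
        + b0 * (∑ l, ∑ k, ∑ q, ∑ p, Gm l k * Gm q p * cBa l q * cHc k p) := by
    simp only [Finset.mul_sum, Finset.sum_mul, mul_add, add_mul,
      Finset.sum_add_distrib]
    refine congrArg₂ (· + ·) (congrArg₂ (· + ·) (congrArg₂ (· + ·) ?_ ?_) ?_) ?_
    · exact sum4_congr _ _ fun a b c d => by ring
    · exact sum4_congr _ _ fun a b c d => by ring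
    · exact sum4_congr _ _ fun a b c d => by ring
    · exact sum4_congr _ _ fun a b c d => by ring
  -- expansion of the covariant second derivatives in the cross terms
  have e5 : (∑ l, ∑ k, ∑ q, ∑ p, Gm l k * Gm q p * aB l * bB q * cHc k p)
      = (∑ l, ∑ k, ∑ q, ∑ p, Gm l k * Gm q p * aB l * bB q * cPP k p)
        - (∑ l, ∑ k, ∑ q, ∑ p, ∑ t, ∑ s,
            Gm l k * Gm q p * aB l * bB q * (H p k s * Gm s t) * cP t) := by
    rw [← Finset.sum_sub_distrib]
    refine Finset.sum_congr rfl fun l _ => ?_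
    rw [← Finset.sum_sub_distrib]
    refine Finset.sum_congr rfl fun k _ => ?_
    rw [← Finset.sum_sub_distrib]
    refine Finset.sum_congr rfl fun q _ => ?_
    rw [← Finset.sum_sub_distrib]
    refine Finset.sum_congr rfl fun p _ => ?_
    rw [hcHc k p, mul_sub]
    refine congrArg₂ Sub.sub rfl ?_
    rw [Finset.mul_sum]
    refine Finset.sum_congr rfl fun t _ => ?_
    rw [show (∑ u, H p k u * Gm u t) * cP t = ∑ u, H p k u * Gm u t * cP t from
      Finset.sum_mul _ _ _, Finset.mul_sum]
    exact Finset.sum_congr rfl fun s _ => by ring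
  have e6 : (∑ l, ∑ k, ∑ q, ∑ p, Gm l k * Gm q p * cBa l q * bP k * cP p)
      = (∑ l, ∑ k, ∑ q, ∑ p, Gm l k * Gm q p * aBB l q * bP k * cP p)
        - (∑ l, ∑ k, ∑ q, ∑ p, ∑ t, ∑ s,
            Gm l k * Gm q p * (Gm t s * A s l q) * aB t * bP k * cP p) := by
    rw [← Finset.sum_sub_distrib]
    refine Finset.sum_congr rfl fun l _ => ?_
    rw [← Finset.sum_sub_distrib]
    refine Finset.sum_congr rfl fun k _ => ?_
    rw [← Finset.sum_sub_distrib]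
    refine Finset.sum_congr rfl fun q _ => ?_
    rw [← Finset.sum_sub_distrib]
    refine Finset.sum_congr rfl fun p _ => ?_
    rw [hcBa l q]
    simp only [mul_sub, sub_mul]
    refine congrArg₂ Sub.sub (by ring) ?_
    simp only [Finset.mul_sum, Finset.sum_mul]
    exact Finset.sum_congr rfl fun t _ => Finset.sum_congr rfl fun s _ => by ring
  -- reindexings
  have r1 : (∑ l, ∑ k, ∑ q, ∑ p, Gm l k * Gm q p * aB q * bB l * cHc k p)
      = (∑ l, ∑ k, ∑ q, ∑ p, Gm l k * Gm q p * aB l * bB q * cHc k p) := by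
    rw [sum4_swap]
    exact sum4_congr _ _ fun l k q p => by rw [hcHcs]; ring
  have r2 : (∑ l, ∑ k, ∑ q, ∑ p, Gm l k * Gm q p * cBa l q * bP p * cP k)
      = (∑ l, ∑ k, ∑ q, ∑ p, Gm l k * Gm q p * cBa l q * bP k * cP p) := by
    rw [sum4_swap]
    exact sum4_congr _ _ fun l k q p => by rw [hcBas]; ring
  have r3 : (∑ l, ∑ k, ∑ q, ∑ p, Gm l k * Gm q p * aB l * bM k q * cP p)
      = (∑ l, ∑ k, ∑ q, ∑ p, Gm l k * Gm q p * aB q * bM p l * cP k) := by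
    rw [sum4_swap]
    exact sum4_congr _ _ fun l k q p => by ring
  have r4 : (∑ l, ∑ k, ∑ q, ∑ p, Gm l k * Gm q p * aB l * bB q * cPP p k)
      = (∑ l, ∑ k, ∑ q, ∑ p, Gm l k * Gm q p * aB l * bB q * cPP k p) :=
    sum4_congr _ _ fun l k q p => by rw [hcPP p k]
  have r5 : (∑ l, ∑ k, ∑ q, ∑ p, Gm l k * Gm q p * aBB l q * bP k * cP p)
      = (∑ l, ∑ k, ∑ q, ∑ p, Gm l k * Gm q p * aBB q l * bP p * cP k) := by
    rw [sum4_swap]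
    exact sum4_congr _ _ fun l k q p => by ring
  have r6 : (∑ l, ∑ k, ∑ q, ∑ p, ∑ t, ∑ s,
        Gm l k * Gm q p * (Gm t s * A s l q) * aB t * bP k * cP p)
      = (∑ l, ∑ k, ∑ q, ∑ p, ∑ t, ∑ s,
        Gm l k * Gm q t * A t s l * Gm s p * aB q * bP p * cP k) := by
    calc (∑ l, ∑ k, ∑ q, ∑ p, ∑ t, ∑ s,
        Gm l k * Gm q p * (Gm t s * A s l q) * aB t * bP k * cP p)
        = (∑ l, ∑ k, ∑ q, ∑ p, ∑ t, ∑ s,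
            Gm q p * Gm t s * A s l q * Gm l k * aB t * bP k * cP p) :=
          sum6_congr _ _ fun l k q p t s => by ring
      _ = (∑ l, ∑ k, ∑ q, ∑ p, ∑ t, ∑ s,
            Gm l k * Gm q t * A t s l * Gm s p * aB q * bP p * cP k) :=
          sum6_perm1 _
  have r7 : (∑ l, ∑ k, ∑ q, ∑ p, ∑ t, ∑ s,
        Gm l k * Gm q p * aB l * bB q * (H p k s * Gm s t) * cP t)
      = (∑ l, ∑ k, ∑ q, ∑ p, ∑ t, ∑ s,
        Gm l k * aB l * Gm q t * H k t s * Gm s p * bB q * cP p) := by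
    calc (∑ l, ∑ k, ∑ q, ∑ p, ∑ t, ∑ s,
        Gm l k * Gm q p * aB l * bB q * (H p k s * Gm s t) * cP t)
        = (∑ l, ∑ k, ∑ q, ∑ p, ∑ t, ∑ s,
            Gm l k * aB l * Gm q p * H k p s * Gm s t * bB q * cP t) :=
          sum6_congr _ _ fun l k q p t s => by rw [hH p k s]; ring
      _ = (∑ l, ∑ k, ∑ q, ∑ p, ∑ t, ∑ s,
            Gm l k * aB l * Gm q t * H k t s * Gm s p * bB q * cP p) :=
          sum6_perm2 _
  rw [e1, e3, e2, e4, r1, r2, r3, r4, e5, e6, r5, r6, r7]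
  ring

end Algebra


section Eval

variable {n : ℕ} {U : Set (Fin n → ℂ)} {z : Fin n → ℂ}
  (hU : IsOpen U) {ginv : Fin n → Fin n → (Fin n → ℂ) → ℂ}
  (hginv : ∀ l k : Fin n, ContDiffOn ℝ (⊤ : ℕ∞) (ginv l k) U)

include hU hginv

lemma wdB_C1op {φ ψ : (Fin n → ℂ) → ℂ} (hφ : ContDiffOn ℝ (⊤ : ℕ∞) φ U)
    (hψ : ContDiffOn ℝ (⊤ : ℕ∞) ψ U) (hz : z ∈ U) (l : Fin n) :
    wdB n l (C1op n ginv φ ψ) z = ∑ q, ∑ p,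
      (wdB n l (ginv q p) z * wdB n q φ z * wdP n p ψ z
        + ginv q p z * wdB n l (wdB n q φ) z * wdP n p ψ z
        + ginv q p z * wdB n q φ z * wdB n l (wdP n p ψ) z) := by
  have d1 : ∀ q p : Fin n, DifferentiableAt ℝ (ginv q p) z :=
    fun q p => diffAt_of_cdOn hU hz (hginv q p)
  have d2 : ∀ q, DifferentiableAt ℝ (wdB n q φ) z :=
    fun q => diffAt_of_cdOn hU hz (contDiffOn_wdB hU hφ q)
  have d3 : ∀ p, DifferentiableAt ℝ (wdP n p ψ) z :=
    fun p => diffAt_of_cdOn hU hz (contDiffOn_wdP hU hψ p)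
  calc wdB n l (C1op n ginv φ ψ) z
      = ∑ q, wdB n l (fun w => ∑ p, ginv q p w * wdB n q φ w * wdP n p ψ w) z :=
        wdB_sum Finset.univ (fun q _ => DifferentiableAt.fun_sum
          (fun p _ => ((d1 q p).fun_mul (d2 q)).fun_mul (d3 p))) l
    _ = ∑ q, ∑ p, wdB n l (fun w => ginv q p w * wdB n q φ w * wdP n p ψ w) z :=
        Finset.sum_congr rfl fun q _ => wdB_sum Finset.univ
          (fun p _ => ((d1 q p).fun_mul (d2 q)).fun_mul (d3 p)) l
    _ = _ := by
        refine Finset.sum_congr rfl fun q _ => Finset.sum_congr rfl fun p _ => ?_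
        rw [wdB_mul ((d1 q p).fun_mul (d2 q)) (d3 p) l, wdB_mul (d1 q p) (d2 q) l]
        ring

lemma wdP_C1op {ψ χ : (Fin n → ℂ) → ℂ} (hψ : ContDiffOn ℝ (⊤ : ℕ∞) ψ U)
    (hχ : ContDiffOn ℝ (⊤ : ℕ∞) χ U) (hz : z ∈ U) (k : Fin n) :
    wdP n k (C1op n ginv ψ χ) z = ∑ q, ∑ p,
      (wdP n k (ginv q p) z * wdB n q ψ z * wdP n p χ z
        + ginv q p z * wdB n q (wdP n k ψ) z * wdP n p χ z
        + ginv q p z * wdB n q ψ z * wdP n k (wdP n p χ) z) := by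
  have d1 : ∀ q p : Fin n, DifferentiableAt ℝ (ginv q p) z :=
    fun q p => diffAt_of_cdOn hU hz (hginv q p)
  have d2 : ∀ q, DifferentiableAt ℝ (wdB n q ψ) z :=
    fun q => diffAt_of_cdOn hU hz (contDiffOn_wdB hU hψ q)
  have d3 : ∀ p, DifferentiableAt ℝ (wdP n p χ) z :=
    fun p => diffAt_of_cdOn hU hz (contDiffOn_wdP hU hχ p)
  calc wdP n k (C1op n ginv ψ χ) z
      = ∑ q, wdP n k (fun w => ∑ p, ginv q p w * wdB n q ψ w * wdP n p χ w) z :=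
        wdP_sum Finset.univ (fun q _ => DifferentiableAt.fun_sum
          (fun p _ => ((d1 q p).fun_mul (d2 q)).fun_mul (d3 p))) k
    _ = ∑ q, ∑ p, wdP n k (fun w => ginv q p w * wdB n q ψ w * wdP n p χ w) z :=
        Finset.sum_congr rfl fun q _ => wdP_sum Finset.univ
          (fun p _ => ((d1 q p).fun_mul (d2 q)).fun_mul (d3 p)) k
    _ = _ := by
        refine Finset.sum_congr rfl fun q _ => Finset.sum_congr rfl fun p _ => ?_
        rw [wdP_mul ((d1 q p).fun_mul (d2 q)) (d3 p) k, wdP_mul (d1 q p) (d2 q) k,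
          show wdP n k (wdB n q ψ) z = wdB n q (wdP n k ψ) z from
            (wdB_wdP_comm hU hz hψ k q).symm]
        ring

omit hginv

lemma cdB2_prod {Φ : (Fin n → ℂ) → ℝ} {φ ψ : (Fin n → ℂ) → ℂ}
    (hφ : ContDiffOn ℝ (⊤ : ℕ∞) φ U) (hψ : ContDiffOn ℝ (⊤ : ℕ∞) ψ U) (hz : z ∈ U) (l q : Fin n) :
    cdB2 n Φ ginv (fun w => φ w * ψ w) l q z
      = cdB2 n Φ ginv φ l q z * ψ z + φ z * cdB2 n Φ ginv ψ l q z
        + wdB n l φ z * wdB n q ψ z + wdB n q φ z * wdB n l ψ z := by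
  have dφ : ∀ w ∈ U, DifferentiableAt ℝ φ w := fun w hw => diffAt_of_cdOn hU hw hφ
  have dψ : ∀ w ∈ U, DifferentiableAt ℝ ψ w := fun w hw => diffAt_of_cdOn hU hw hψ
  have h2nd : wdB n q (wdB n l (fun w => φ w * ψ w)) z
      = wdB n q (wdB n l φ) z * ψ z + wdB n l φ z * wdB n q ψ z
        + (wdB n q φ z * wdB n l ψ z + φ z * wdB n q (wdB n l ψ) z) := by
    have hev : wdB n l (fun w => φ w * ψ w)
        =ᶠ[nhds z] (fun w => wdB n l φ w * ψ w + φ w * wdB n l ψ w) := by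
      filter_upwards [hU.mem_nhds hz] with w hw
      exact wdB_mul (dφ w hw) (dψ w hw) l
    rw [wdB_congr hev q,
      wdB_add ((diffAt_of_cdOn hU hz (contDiffOn_wdB hU hφ l)).fun_mul (dψ z hz))
        ((dφ z hz).fun_mul (diffAt_of_cdOn hU hz (contDiffOn_wdB hU hψ l))) q,
      wdB_mul (diffAt_of_cdOn hU hz (contDiffOn_wdB hU hφ l)) (dψ z hz) q,
      wdB_mul (dφ z hz) (diffAt_of_cdOn hU hz (contDiffOn_wdB hU hψ l)) q]
  have h1st : ∀ t : Fin n, wdB n t (fun w => φ w * ψ w) z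
      = wdB n t φ z * ψ z + φ z * wdB n t ψ z :=
    fun t => wdB_mul (dφ z hz) (dψ z hz) t
  show wdB n q (wdB n l (fun w => φ w * ψ w)) z
      - ∑ t, GamB n Φ ginv t q l z * wdB n t (fun w => φ w * ψ w) z = _
  rw [h2nd]
  have hsum : ∑ t, GamB n Φ ginv t q l z * wdB n t (fun w => φ w * ψ w) z
      = (∑ t, GamB n Φ ginv t q l z * wdB n t φ z) * ψ z
        + φ z * (∑ t, GamB n Φ ginv t q l z * wdB n t ψ z) := by
    rw [Finset.sum_mul, Finset.mul_sum, ← Finset.sum_add_distrib]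
    exact Finset.sum_congr rfl fun t _ => by rw [h1st t]; ring
  rw [hsum]
  show _ = (wdB n q (wdB n l φ) z - ∑ t, GamB n Φ ginv t q l z * wdB n t φ z) * ψ z
      + φ z * (wdB n q (wdB n l ψ) z - ∑ t, GamB n Φ ginv t q l z * wdB n t ψ z)
      + wdB n l φ z * wdB n q ψ z + wdB n q φ z * wdB n l ψ z
  ring

lemma cdH2_prod {Φ : (Fin n → ℂ) → ℝ} {ψ χ : (Fin n → ℂ) → ℂ}
    (hψ : ContDiffOn ℝ (⊤ : ℕ∞) ψ U) (hχ : ContDiffOn ℝ (⊤ : ℕ∞) χ U) (hz : z ∈ U) (k p : Fin n) :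
    cdH2 n Φ ginv (fun w => ψ w * χ w) k p z
      = cdH2 n Φ ginv ψ k p z * χ z + wdP n k ψ z * wdP n p χ z
        + wdP n p ψ z * wdP n k χ z + ψ z * cdH2 n Φ ginv χ k p z := by
  have dψ : ∀ w ∈ U, DifferentiableAt ℝ ψ w := fun w hw => diffAt_of_cdOn hU hw hψ
  have dχ : ∀ w ∈ U, DifferentiableAt ℝ χ w := fun w hw => diffAt_of_cdOn hU hw hχ
  have h2nd : wdP n p (wdP n k (fun w => ψ w * χ w)) z
      = wdP n p (wdP n k ψ) z * χ z + wdP n k ψ z * wdP n p χ z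
        + (wdP n p ψ z * wdP n k χ z + ψ z * wdP n p (wdP n k χ) z) := by
    have hev : wdP n k (fun w => ψ w * χ w)
        =ᶠ[nhds z] (fun w => wdP n k ψ w * χ w + ψ w * wdP n k χ w) := by
      filter_upwards [hU.mem_nhds hz] with w hw
      exact wdP_mul (dψ w hw) (dχ w hw) k
    rw [wdP_congr hev p,
      wdP_add ((diffAt_of_cdOn hU hz (contDiffOn_wdP hU hψ k)).fun_mul (dχ z hz))
        ((dψ z hz).fun_mul (diffAt_of_cdOn hU hz (contDiffOn_wdP hU hχ k))) p,
      wdP_mul (diffAt_of_cdOn hU hz (contDiffOn_wdP hU hψ k)) (dχ z hz) p,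
      wdP_mul (dψ z hz) (diffAt_of_cdOn hU hz (contDiffOn_wdP hU hχ k)) p]
  have h1st : ∀ s : Fin n, wdP n s (fun w => ψ w * χ w) z
      = wdP n s ψ z * χ z + ψ z * wdP n s χ z :=
    fun s => wdP_mul (dψ z hz) (dχ z hz) s
  show wdP n p (wdP n k (fun w => ψ w * χ w)) z
      - ∑ s, GamH n Φ ginv s p k z * wdP n s (fun w => ψ w * χ w) z = _
  rw [h2nd]
  have hsum : ∑ s, GamH n Φ ginv s p k z * wdP n s (fun w => ψ w * χ w) z
      = (∑ s, GamH n Φ ginv s p k z * wdP n s ψ z) * χ z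
        + ψ z * (∑ s, GamH n Φ ginv s p k z * wdP n s χ z) := by
    rw [Finset.sum_mul, Finset.mul_sum, ← Finset.sum_add_distrib]
    exact Finset.sum_congr rfl fun s _ => by rw [h1st s]; ring
  rw [hsum]
  show _ = (wdP n p (wdP n k ψ) z - ∑ s, GamH n Φ ginv s p k z * wdP n s ψ z) * χ z
      + wdP n k ψ z * wdP n p χ z + wdP n p ψ z * wdP n k χ z
      + ψ z * (wdP n p (wdP n k χ) z - ∑ s, GamH n Φ ginv s p k z * wdP n s χ z)
  ring

end Eval

/-- second-order associativity identity: on `U`,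
`C₂(φ,ψ)·χ + C₁(C₁(φ,ψ),χ) + C₂(φψ,χ) = φ·C₂(ψ,χ) + C₁(φ,C₁(ψ,χ)) + C₂(φ,ψχ)`. -/
theorem stmt_3 (n : ℕ) (hn : 1 ≤ n) (U : Set (Fin n → ℂ)) (hU : IsOpen U)
    (Φ : (Fin n → ℂ) → ℝ) (hΦ : ContDiffOn ℝ (⊤ : ℕ∞) Φ U)
    (ginv : Fin n → Fin n → (Fin n → ℂ) → ℂ)
    (hginv : ∀ l k : Fin n, ContDiffOn ℝ (⊤ : ℕ∞) (ginv l k) U)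
    (hinv1 : ∀ z ∈ U, ∀ l q : Fin n,
      (∑ k, ginv l k z * gdn n Φ k q z) = if l = q then 1 else 0)
    (hinv2 : ∀ z ∈ U, ∀ p k : Fin n,
      (∑ l, gdn n Φ p l z * ginv l k z) = if p = k then 1 else 0) :
    ∀ φ ψ χ : (Fin n → ℂ) → ℂ,
      ContDiffOn ℝ (⊤ : ℕ∞) φ U → ContDiffOn ℝ (⊤ : ℕ∞) ψ U → ContDiffOn ℝ (⊤ : ℕ∞) χ U →
      ∀ z ∈ U,
        C2op n Φ ginv φ ψ z * χ z + C1op n ginv (C1op n ginv φ ψ) χ z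
            + C2op n Φ ginv (fun w => φ w * ψ w) χ z
          = φ z * C2op n Φ ginv ψ χ z + C1op n ginv φ (C1op n ginv ψ χ) z
            + C2op n Φ ginv φ (fun w => ψ w * χ w) z := by
  intro φ ψ χ hφ hψ hχ z hz
  have E2 : C1op n ginv (C1op n ginv φ ψ) χ z
      = ∑ l, ∑ k, ginv l k z * (∑ q, ∑ p,
          (wdB n l (ginv q p) z * wdB n q φ z * wdP n p ψ z
            + ginv q p z * wdB n l (wdB n q φ) z * wdP n p ψ z
            + ginv q p z * wdB n q φ z * wdB n l (wdP n p ψ) z)) * wdP n k χ z := by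
    show (∑ l, ∑ k, ginv l k z * wdB n l (C1op n ginv φ ψ) z * wdP n k χ z) = _
    exact Finset.sum_congr rfl fun l _ => Finset.sum_congr rfl fun k _ => by
      rw [wdB_C1op hU hginv hφ hψ hz l]
  have E5 : C1op n ginv φ (C1op n ginv ψ χ) z
      = ∑ l, ∑ k, ginv l k z * wdB n l φ z * (∑ q, ∑ p,
          (wdP n k (ginv q p) z * wdB n q ψ z * wdP n p χ z
            + ginv q p z * wdB n q (wdP n k ψ) z * wdP n p χ z
            + ginv q p z * wdB n q ψ z * wdP n k (wdP n p χ) z)) := by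
    show (∑ l, ∑ k, ginv l k z * wdB n l φ z * wdP n k (C1op n ginv ψ χ) z) = _
    exact Finset.sum_congr rfl fun l _ => Finset.sum_congr rfl fun k _ => by
      rw [wdP_C1op hU hginv hψ hχ hz k]
  have E3 : C2op n Φ ginv (fun w => φ w * ψ w) χ z
      = 1 / 2 * ∑ l, ∑ k, ∑ q, ∑ p, ginv l k z * ginv q p z
          * (cdB2 n Φ ginv φ l q z * ψ z + φ z * cdB2 n Φ ginv ψ l q z
            + wdB n l φ z * wdB n q ψ z + wdB n q φ z * wdB n l ψ z)
          * cdH2 n Φ ginv χ k p z := by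
    show (1 / 2 : ℂ) * (∑ l, ∑ k, ∑ q, ∑ p, ginv l k z * ginv q p z
        * cdB2 n Φ ginv (fun w => φ w * ψ w) l q z * cdH2 n Φ ginv χ k p z) = _
    refine congrArg _ ?_
    refine Finset.sum_congr rfl fun l _ => Finset.sum_congr rfl fun k _ =>
      Finset.sum_congr rfl fun q _ => Finset.sum_congr rfl fun p _ => ?_
    rw [cdB2_prod hU hφ hψ hz l q]
  have E6 : C2op n Φ ginv φ (fun w => ψ w * χ w) z
      = 1 / 2 * ∑ l, ∑ k, ∑ q, ∑ p, ginv l k z * ginv q p z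
          * cdB2 n Φ ginv φ l q z
          * (cdH2 n Φ ginv ψ k p z * χ z + wdP n k ψ z * wdP n p χ z
            + wdP n p ψ z * wdP n k χ z + ψ z * cdH2 n Φ ginv χ k p z) := by
    show (1 / 2 : ℂ) * (∑ l, ∑ k, ∑ q, ∑ p, ginv l k z * ginv q p z
        * cdB2 n Φ ginv φ l q z * cdH2 n Φ ginv (fun w => ψ w * χ w) k p z) = _
    refine congrArg _ ?_
    refine Finset.sum_congr rfl fun l _ => Finset.sum_congr rfl fun k _ =>
      Finset.sum_congr rfl fun q _ => Finset.sum_congr rfl fun p _ => ?_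
    rw [cdH2_prod hU hψ hχ hz k p]
  rw [E2, E3, E5, E6]
  exact key_algebra (fun a b => ginv a b z) (fun s a b => g3a n Φ s a b z)
    (fun a b c => g3h n Φ a b c z)
    (fun m q p => wdB n m (ginv q p) z) (fun m q p => wdP n m (ginv q p) z)
    (fun l => wdB n l φ z) (fun q => wdB n q ψ z) (fun k => wdP n k ψ z)
    (fun p => wdP n p χ z)
    (fun a b => wdB n b (wdB n a φ) z) (fun x y => wdB n y (wdP n x ψ) z)
    (fun a b => wdP n b (wdP n a χ) z)
    (fun l q => cdB2 n Φ ginv φ l q z) (fun l q => cdB2 n Φ ginv ψ l q z)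
    (fun k p => cdH2 n Φ ginv ψ k p z) (fun k p => cdH2 n Φ ginv χ k p z)
    (φ z) (ψ z) (χ z)
    (fun s x y => g3a_symm hU hz hΦ s x y)
    (fun x y t => g3h_symm hU hz hΦ x y t)
    (fun x y => wdB_wdB_comm hU hz hφ x y)
    (fun x y => wdP_wdP_comm hU hz hχ x y)
    (fun m q p => wdB_ginv hU hΦ hginv hinv1 hinv2 hz m q p)
    (fun m q p => wdP_ginv hU hΦ hginv hinv1 hinv2 hz m q p)
    (fun l q => rfl) (fun k p => rfl)
end
end

section
/- The operators S and S̃ coincide: for all indices l, k ∈ {1,…,n}, on U one has Σ_{m,n,p,q,s,t} g_{mn̄} (∂̄_q g^{l̄s})(∂_s g^{n̄p})(∂̄_t g^{q̄m})(∂_p g^{t̄k}) = Σ_{m,n,p,q,s,t} (∂̄_q g^{l̄m})(∂_m g^{n̄p})(∂̄_n g^{q̄s})(∂_p g^{t̄k}) g_{st̄}. -/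
open scoped BigOperators
open scoped ContDiff

noncomputable section

def wdg (N : ℕ) (c : ℂ) (k : Fin N) (f : (Fin N → ℂ) → ℂ) : (Fin N → ℂ) → ℂ :=
  fun z => (1 / 2 : ℂ) *
    (fderiv ℝ f z (ebasis N k) + c * fderiv ℝ f z (Complex.I • ebasis N k))

variable {N : ℕ} {U : Set (Fin N → ℂ)} {z : Fin N → ℂ}

lemma wdB_eq_wdg (k : Fin N) (f : (Fin N → ℂ) → ℂ) : wdB N k f = wdg N Complex.I k f := rfl

lemma wdP_eq_wdg (k : Fin N) (f : (Fin N → ℂ) → ℂ) : wdP N k f = wdg N (-Complex.I) k f := by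
  funext z; simp only [wdP, wdg]; ring

lemma fderiv_apply_contDiffOn (hU : IsOpen U) {f : (Fin N → ℂ) → ℂ}
    (hf : ContDiffOn ℝ ∞ f U) (v : Fin N → ℂ) :
    ContDiffOn ℝ ∞ (fun y => fderiv ℝ f y v) U :=
  (ContinuousLinearMap.apply ℝ ℂ v).contDiff.comp_contDiffOn
    (hf.fderiv_of_isOpen hU (by norm_num))

lemma diffAt (hU : IsOpen U) {f : (Fin N → ℂ) → ℂ} (hf : ContDiffOn ℝ ∞ f U) (hz : z ∈ U) :
    DifferentiableAt ℝ f z :=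
  (hf.differentiableOn (by norm_num)).differentiableAt (hU.mem_nhds hz)

lemma wdg_contDiffOn (hU : IsOpen U) {f : (Fin N → ℂ) → ℂ} (hf : ContDiffOn ℝ ∞ f U)
    (c : ℂ) (k : Fin N) : ContDiffOn ℝ ∞ (wdg N c k f) U := by
  unfold wdg
  exact contDiffOn_const.mul ((fderiv_apply_contDiffOn hU hf _).add
    (contDiffOn_const.mul (fderiv_apply_contDiffOn hU hf _)))

lemma wdg_congr {f g : (Fin N → ℂ) → ℂ} (h : f =ᶠ[nhds z] g) (c : ℂ) (k : Fin N) :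
    wdg N c k f z = wdg N c k g z := by
  unfold wdg; rw [h.fderiv_eq]

lemma wdg_const {f : (Fin N → ℂ) → ℂ} (cst : ℂ) (h : f =ᶠ[nhds z] fun _ => cst)
    (c : ℂ) (k : Fin N) : wdg N c k f z = 0 := by
  rw [wdg_congr h]; unfold wdg; simp

lemma wdg_mul {f g : (Fin N → ℂ) → ℂ} (hf : DifferentiableAt ℝ f z)
    (hg : DifferentiableAt ℝ g z) (c : ℂ) (k : Fin N) :
    wdg N c k (fun y => f y * g y) z = wdg N c k f z * g z + f z * wdg N c k g z := by
  unfold wdg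
  rw [fderiv_fun_mul hf hg]
  simp only [ContinuousLinearMap.add_apply, ContinuousLinearMap.smul_apply, smul_eq_mul]
  ring

lemma wdg_sum {F : Fin N → (Fin N → ℂ) → ℂ} (hF : ∀ m, DifferentiableAt ℝ (F m) z)
    (c : ℂ) (k : Fin N) :
    wdg N c k (fun y => ∑ m, F m y) z = ∑ m, wdg N c k (F m) z := by
  unfold wdg
  rw [fderiv_fun_sum (fun m _ => hF m)]
  simp only [ContinuousLinearMap.sum_apply]
  rw [Finset.mul_sum, ← Finset.sum_add_distrib, Finset.mul_sum]

lemma fderiv_swap (hU : IsOpen U) {f : (Fin N → ℂ) → ℂ} (hf : ContDiffOn ℝ ∞ f U)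
    (hz : z ∈ U) (v w : Fin N → ℂ) :
    fderiv ℝ (fun y => fderiv ℝ f y w) z v = fderiv ℝ (fun y => fderiv ℝ f y v) z w := by
  have hd : ContDiffOn ℝ ∞ (fderiv ℝ f) U := hf.fderiv_of_isOpen hU (by norm_num)
  have hdz : DifferentiableAt ℝ (fderiv ℝ f) z :=
    (hd.differentiableOn (by norm_num)).differentiableAt (hU.mem_nhds hz)
  have hsym : IsSymmSndFDerivAt ℝ f z :=
    (hf.contDiffAt (hU.mem_nhds hz)).isSymmSndFDerivAt
      (by rw [minSmoothness_of_isRCLikeNormedField]; exact WithTop.coe_le_coe.2 le_top)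
  have key : ∀ u : Fin N → ℂ, fderiv ℝ (fun y => fderiv ℝ f y u) z
      = (fderiv ℝ (fderiv ℝ f) z).flip u := by
    intro u
    have h2 := fderiv_clm_apply (c := fderiv ℝ f) (u := fun _ => u) hdz (differentiableAt_const u)
    simpa using h2
  rw [key w, key v]
  simp only [ContinuousLinearMap.flip_apply]
  exact hsym v w

lemma wdg_fderiv_apply (hU : IsOpen U) {f : (Fin N → ℂ) → ℂ} (hf : ContDiffOn ℝ ∞ f U)
    (hz : z ∈ U) (d : ℂ) (l : Fin N) (u : Fin N → ℂ) :
    fderiv ℝ (wdg N d l f) z u = (1 / 2 : ℂ) *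
      (fderiv ℝ (fun y => fderiv ℝ f y (ebasis N l)) z u
        + d * fderiv ℝ (fun y => fderiv ℝ f y (Complex.I • ebasis N l)) z u) := by
  have hA : DifferentiableAt ℝ (fun y => fderiv ℝ f y (ebasis N l)) z :=
    diffAt hU (fderiv_apply_contDiffOn hU hf _) hz
  have hB : DifferentiableAt ℝ (fun y => fderiv ℝ f y (Complex.I • ebasis N l)) z :=
    diffAt hU (fderiv_apply_contDiffOn hU hf _) hz
  have h1 : HasFDerivAt (wdg N d l f)
      ((1 / 2 : ℂ) • ((fderiv ℝ (fun y => fderiv ℝ f y (ebasis N l)) z)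
        + d • fderiv ℝ (fun y => fderiv ℝ f y (Complex.I • ebasis N l)) z)) z :=
    ((hA.hasFDerivAt.add (hB.hasFDerivAt.const_mul d)).const_mul (1 / 2 : ℂ))
  rw [h1.fderiv]
  simp only [ContinuousLinearMap.smul_apply, ContinuousLinearMap.add_apply, smul_eq_mul]

lemma wdg_comm (hU : IsOpen U) {f : (Fin N → ℂ) → ℂ} (hf : ContDiffOn ℝ ∞ f U)
    (hz : z ∈ U) (c d : ℂ) (k l : Fin N) :
    wdg N c k (wdg N d l f) z = wdg N d l (wdg N c k f) z := by
  have h := fderiv_swap hU hf hz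
  have e1 : ∀ (g : (Fin N → ℂ) → ℂ) (c' : ℂ) (k' : Fin N),
      wdg N c' k' g z = (1 / 2 : ℂ) *
        (fderiv ℝ g z (ebasis N k') + c' * fderiv ℝ g z (Complex.I • ebasis N k')) :=
    fun _ _ _ => rfl
  rw [e1 (wdg N d l f) c k, e1 (wdg N c k f) d l,
    wdg_fderiv_apply hU hf hz d l (ebasis N k),
    wdg_fderiv_apply hU hf hz d l (Complex.I • ebasis N k),
    wdg_fderiv_apply hU hf hz c k (ebasis N l),
    wdg_fderiv_apply hU hf hz c k (Complex.I • ebasis N l),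
    h (ebasis N l) (ebasis N k),
    h (ebasis N l) (Complex.I • ebasis N k),
    h (Complex.I • ebasis N l) (ebasis N k),
    h (Complex.I • ebasis N l) (Complex.I • ebasis N k)]
  ring


/-- the coefficients of the operators `S` and `S̃` coincide on `U`:
`Σ g_{mn̄} (∂̄_q g^{l̄s})(∂_s g^{n̄p})(∂̄_t g^{q̄m})(∂_p g^{t̄k})
  = Σ (∂̄_q g^{l̄m})(∂_m g^{n̄p})(∂̄_n g^{q̄s})(∂_p g^{t̄k}) g_{st̄}`. -/
theorem stmt_6 (n : ℕ) (hn : 1 ≤ n) (U : Set (Fin n → ℂ)) (hU : IsOpen U)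
    (Φ : (Fin n → ℂ) → ℝ) (hΦ : ContDiffOn ℝ (⊤ : ℕ∞) Φ U)
    (ginv : Fin n → Fin n → (Fin n → ℂ) → ℂ)
    (hginv : ∀ l k : Fin n, ContDiffOn ℝ (⊤ : ℕ∞) (ginv l k) U)
    (hinv1 : ∀ z ∈ U, ∀ l q : Fin n,
      (∑ k, ginv l k z * gdn n Φ k q z) = if l = q then 1 else 0)
    (hinv2 : ∀ z ∈ U, ∀ p k : Fin n,
      (∑ l, gdn n Φ p l z * ginv l k z) = if p = k then 1 else 0) :
    ∀ z ∈ U, ∀ l k : Fin n,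
      (∑ m, ∑ m', ∑ p, ∑ q, ∑ s, ∑ t,
          gdn n Φ m m' z * wdB n q (ginv l s) z * wdP n s (ginv m' p) z *
            wdB n t (ginv q m) z * wdP n p (ginv t k) z)
        = ∑ m, ∑ m', ∑ p, ∑ q, ∑ s, ∑ t,
            wdB n q (ginv l m) z * wdP n m (ginv m' p) z * wdB n m' (ginv q s) z *
              wdP n p (ginv t k) z * gdn n Φ s t z := by
  intro z hz l k
  -- smoothness facts
  have hPhic : ContDiffOn ℝ ∞ (Phic n Φ) U := by
    have h : ContDiff ℝ ∞ (fun x : ℝ => (x : ℂ)) := Complex.ofRealCLM.contDiff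
    exact h.comp_contDiffOn (hΦ.of_le (by simp))
  have gdn_eq : ∀ a b : Fin n, gdn n Φ a b = wdg n (-Complex.I) a (wdg n Complex.I b (Phic n Φ)) := by
    intro a b; unfold gdn; rw [wdP_eq_wdg, wdB_eq_wdg]
  have hwB : ∀ b : Fin n, ContDiffOn ℝ ∞ (wdg n Complex.I b (Phic n Φ)) U :=
    fun b => wdg_contDiffOn hU hPhic _ _
  have hgdnC : ∀ a b : Fin n, ContDiffOn ℝ ∞ (gdn n Φ a b) U := by
    intro a b; rw [gdn_eq a b]; exact wdg_contDiffOn hU (hwB b) _ _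
  have hginvC : ∀ a b : Fin n, ContDiffOn ℝ ∞ (ginv a b) U := fun a b => (hginv a b).of_le (by simp)
  have ginvD : ∀ a b : Fin n, DifferentiableAt ℝ (ginv a b) z := fun a b => diffAt hU (hginvC a b) hz
  have gdnD : ∀ a b : Fin n, DifferentiableAt ℝ (gdn n Φ a b) z := fun a b => diffAt hU (hgdnC a b) hz
  -- symmetry
  have sym : ∀ (m b t : Fin n), wdg n Complex.I t (gdn n Φ m b) z = wdg n Complex.I b (gdn n Φ m t) z := by
    intro m b t
    rw [gdn_eq m b, gdn_eq m t]
    calc wdg n Complex.I t (wdg n (-Complex.I) m (wdg n Complex.I b (Phic n Φ))) z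
        = wdg n (-Complex.I) m (wdg n Complex.I t (wdg n Complex.I b (Phic n Φ))) z :=
          wdg_comm hU (hwB b) hz Complex.I (-Complex.I) t m
      _ = wdg n (-Complex.I) m (wdg n Complex.I b (wdg n Complex.I t (Phic n Φ))) z :=
          wdg_congr (Filter.eventuallyEq_of_mem (hU.mem_nhds hz)
            (fun y hy => wdg_comm hU hPhic hy Complex.I Complex.I t b)) _ _
      _ = wdg n Complex.I b (wdg n (-Complex.I) m (wdg n Complex.I t (Phic n Φ))) z :=
          (wdg_comm hU (wdg_contDiffOn hU hPhic Complex.I t) hz Complex.I (-Complex.I) b m).symm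
  -- differentiated inverse relation
  have h1 : ∀ (d q b : Fin n),
      (∑ m, (wdg n Complex.I d (ginv q m) z * gdn n Φ m b z
        + ginv q m z * wdg n Complex.I d (gdn n Φ m b) z)) = 0 := by
    intro d q b
    have hF : ∀ m : Fin n, DifferentiableAt ℝ (fun y => ginv q m y * gdn n Φ m b y) z :=
      fun m => (ginvD q m).mul (gdnD m b)
    calc (∑ m, (wdg n Complex.I d (ginv q m) z * gdn n Φ m b z
          + ginv q m z * wdg n Complex.I d (gdn n Φ m b) z))
        = ∑ m, wdg n Complex.I d (fun y => ginv q m y * gdn n Φ m b y) z :=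
          Finset.sum_congr rfl fun m _ => (wdg_mul (ginvD q m) (gdnD m b) Complex.I d).symm
      _ = wdg n Complex.I d (fun y => ∑ m, ginv q m y * gdn n Φ m b y) z :=
          (wdg_sum hF Complex.I d).symm
      _ = 0 := wdg_const _ (Filter.eventuallyEq_of_mem (hU.mem_nhds hz)
          (fun y hy => hinv1 y hy q b)) Complex.I d
  -- key lemma
  have key : ∀ (q b t : Fin n),
      (∑ m, gdn n Φ m b z * wdg n Complex.I t (ginv q m) z)
        = ∑ m, wdg n Complex.I b (ginv q m) z * gdn n Φ m t z := by
    intro q b t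
    have e1 := h1 t q b
    have e2 := h1 b q t
    rw [Finset.sum_add_distrib] at e1 e2
    have e3 : (∑ m, ginv q m z * wdg n Complex.I t (gdn n Φ m b) z)
        = ∑ m, ginv q m z * wdg n Complex.I b (gdn n Φ m t) z :=
      Finset.sum_congr rfl fun m _ => by rw [sym m b t]
    have e4 : (∑ m, gdn n Φ m b z * wdg n Complex.I t (ginv q m) z)
        = ∑ m, wdg n Complex.I t (ginv q m) z * gdn n Φ m b z :=
      Finset.sum_congr rfl fun m _ => mul_comm _ _
    linear_combination e4 + e1 - e3 - e2
  -- sum reshuffling helpers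
  have move_in : ∀ (X : Fin n → Fin n → Fin n → Fin n → Fin n → Fin n → ℂ),
      (∑ m, ∑ m', ∑ p, ∑ q, ∑ s, ∑ t, X m m' p q s t)
        = ∑ m', ∑ p, ∑ q, ∑ s, ∑ t, ∑ m, X m m' p q s t := by
    intro X
    rw [Finset.sum_comm]
    refine Finset.sum_congr rfl fun m' _ => ?_
    rw [Finset.sum_comm]
    refine Finset.sum_congr rfl fun p _ => ?_
    rw [Finset.sum_comm]
    refine Finset.sum_congr rfl fun q _ => ?_
    rw [Finset.sum_comm]
    refine Finset.sum_congr rfl fun s _ => ?_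
    rw [Finset.sum_comm]
  have reorder2 : ∀ (X : Fin n → Fin n → Fin n → Fin n → Fin n → Fin n → ℂ),
      (∑ m', ∑ p, ∑ q, ∑ s, ∑ t, ∑ m, X m' p q s t m)
        = ∑ s, ∑ m', ∑ p, ∑ q, ∑ m, ∑ t, X m' p q s t m := by
    intro X
    calc (∑ m', ∑ p, ∑ q, ∑ s, ∑ t, ∑ m, X m' p q s t m)
        = ∑ m', ∑ p, ∑ q, ∑ s, ∑ m, ∑ t, X m' p q s t m :=
          Finset.sum_congr rfl fun m' _ => Finset.sum_congr rfl fun p _ =>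
            Finset.sum_congr rfl fun q _ => Finset.sum_congr rfl fun s _ => Finset.sum_comm
      _ = ∑ m', ∑ p, ∑ s, ∑ q, ∑ m, ∑ t, X m' p q s t m :=
          Finset.sum_congr rfl fun m' _ => Finset.sum_congr rfl fun p _ => Finset.sum_comm
      _ = ∑ m', ∑ s, ∑ p, ∑ q, ∑ m, ∑ t, X m' p q s t m :=
          Finset.sum_congr rfl fun m' _ => Finset.sum_comm
      _ = ∑ s, ∑ m', ∑ p, ∑ q, ∑ m, ∑ t, X m' p q s t m := Finset.sum_comm
  -- main computation
  simp only [wdB_eq_wdg, wdP_eq_wdg]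
  calc (∑ m, ∑ m', ∑ p, ∑ q, ∑ s, ∑ t,
          gdn n Φ m m' z * wdg n Complex.I q (ginv l s) z * wdg n (-Complex.I) s (ginv m' p) z *
            wdg n Complex.I t (ginv q m) z * wdg n (-Complex.I) p (ginv t k) z)
      = ∑ m', ∑ p, ∑ q, ∑ s, ∑ t, ∑ m,
          gdn n Φ m m' z * wdg n Complex.I q (ginv l s) z * wdg n (-Complex.I) s (ginv m' p) z *
            wdg n Complex.I t (ginv q m) z * wdg n (-Complex.I) p (ginv t k) z := move_in _
    _ = ∑ m', ∑ p, ∑ q, ∑ s, ∑ t, ∑ m,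
          wdg n Complex.I q (ginv l s) z * wdg n (-Complex.I) s (ginv m' p) z *
            wdg n Complex.I m' (ginv q m) z * wdg n (-Complex.I) p (ginv t k) z * gdn n Φ m t z := by
        refine Finset.sum_congr rfl fun m' _ => Finset.sum_congr rfl fun p _ =>
          Finset.sum_congr rfl fun q _ => Finset.sum_congr rfl fun s _ =>
          Finset.sum_congr rfl fun t _ => ?_
        calc (∑ m, gdn n Φ m m' z * wdg n Complex.I q (ginv l s) z * wdg n (-Complex.I) s (ginv m' p) z *
                wdg n Complex.I t (ginv q m) z * wdg n (-Complex.I) p (ginv t k) z)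
            = (wdg n Complex.I q (ginv l s) z * wdg n (-Complex.I) s (ginv m' p) z *
                wdg n (-Complex.I) p (ginv t k) z) *
                ∑ m, gdn n Φ m m' z * wdg n Complex.I t (ginv q m) z := by
              rw [Finset.mul_sum]; exact Finset.sum_congr rfl fun m _ => by ring
          _ = (wdg n Complex.I q (ginv l s) z * wdg n (-Complex.I) s (ginv m' p) z *
                wdg n (-Complex.I) p (ginv t k) z) *
                ∑ m, wdg n Complex.I m' (ginv q m) z * gdn n Φ m t z := by rw [key q m' t]
          _ = ∑ m, wdg n Complex.I q (ginv l s) z * wdg n (-Complex.I) s (ginv m' p) z *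
                wdg n Complex.I m' (ginv q m) z * wdg n (-Complex.I) p (ginv t k) z * gdn n Φ m t z := by
              rw [Finset.mul_sum]; exact Finset.sum_congr rfl fun m _ => by ring
    _ = ∑ s, ∑ m', ∑ p, ∑ q, ∑ m, ∑ t,
          wdg n Complex.I q (ginv l s) z * wdg n (-Complex.I) s (ginv m' p) z *
            wdg n Complex.I m' (ginv q m) z * wdg n (-Complex.I) p (ginv t k) z * gdn n Φ m t z :=
        reorder2 _
end
end
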